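/- arXiv:1409.5404 — 2 statements merged into one kernel-verified Lean document; each statement's English description precedes it below -/
import Mathlib

section
/- Let p = 3, V = (ZMod 3) × (ZMod 3), V₀ its set of nonzero elements. Let φ : ℤ[V₀] → ℤ[V₀] be the additive map sending the generator at v to the sum of the generators at all u ∈ V₀ with ω(v,u) = 1, let s : ℤ[V₀] → V be the additive map sending the generator at v to v, and let π : ℤ[V₀] → ℤ[P(V)] be the map induced by sending each nonzero vector to the line it spans. Then the image under φ of the kernel of π is exactly (ker s) ∩ (ker π); in particular φ restricts to a bijection from ker π onto (ker s) ∩ (ker π). -/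
/-!
Identify `ker π` with the odd vectors, `x (-v) = -x v`. On odd vectors `φ² = -3` (a finite check
on the matrix of `φ`), so `φ` is injective there. Each `φ(e_v)` is the sum over the affine line
`ω v · = 1`, whose points sum to `0` in `V`; hence `s ∘ φ = 0`. Conversely, for odd `y`, pairing
`v` with `-v` gives `φ y u ≡ ω u (s y) (mod 3)`, so `s y = 0` forces `φ y = 3 z` with `z` odd,
and then `φ (-z) = y`.
-/

open Finset Matrix

abbrev V₀ := {v : ZMod 3 × ZMod 3 // v ≠ 0}

instance : InvolutiveNeg V₀ where
  neg v := ⟨-v, neg_ne_zero.2 v.2⟩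
  neg_neg v := Subtype.ext (neg_neg (v : ZMod 3 × ZMod 3))

@[simp] lemma V₀.coe_neg (v : V₀) : ((-v : V₀) : ZMod 3 × ZMod 3) = -v := rfl

lemma V₀.ne_neg : ∀ v : V₀, v ≠ -v := by decide

def ω {R : Type*} [CommRing R] (v u : R × R) : R := v.1 * u.2 - v.2 * u.1

lemma ω_neg_neg {R : Type*} [CommRing R] (v u : R × R) : ω (-v) (-u) = ω v u := by
  simp only [ω, Prod.fst_neg, Prod.snd_neg, neg_mul_neg]

noncomputable def sumMap : (V₀ →₀ ℤ) →ₗ[ℤ] ZMod 3 × ZMod 3 :=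
  Finsupp.linearCombination ℤ (fun v : V₀ => (v : ZMod 3 × ZMod 3))

noncomputable def projMap : (V₀ →₀ ℤ) →ₗ[ℤ] (Projectivization (ZMod 3) (ZMod 3 × ZMod 3) →₀ ℤ) :=
  Finsupp.lmapDomain ℤ ℤ fun v : V₀ => Projectivization.mk (ZMod 3) (v : ZMod 3 × ZMod 3) v.prop

noncomputable def phi : (V₀ →₀ ℤ) →ₗ[ℤ] (V₀ →₀ ℤ) :=
  Finsupp.linearCombination ℤ fun v : V₀ =>
    ∑ u ∈ univ.filter (fun u : V₀ => ω (v : ZMod 3 × ZMod 3) u = 1), Finsupp.single u 1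

def phiMatrix : Matrix V₀ V₀ ℤ :=
  Matrix.of fun v u => if ω (v : ZMod 3 × ZMod 3) u = 1 then 1 else 0

section Odd

variable {ι R : Type*} [Fintype ι] [InvolutiveNeg ι] [CommRing R] {x : ι → R}

lemma two_mul_sum_mul_of_odd (hx : ∀ i, x (-i) = -x i) (a : ι → R) :
    2 * ∑ i, x i * a i = ∑ i, x i * (a i - a (-i)) := by
  have h : ∑ i, x i * a i = -∑ i, x i * a (-i) := by
    rw [← Fintype.sum_equiv (Equiv.neg ι) (fun i => x (-i) * a (-i)) _ fun _ => rfl]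
    simp [hx]
  rw [two_mul]
  nth_rewrite 2 [h]
  rw [← sub_eq_add_neg, ← sum_sub_distrib]
  simp only [mul_sub]

lemma vecMul_eq_of_odd [NoZeroDivisors R] (h2 : (2 : R) ≠ 0) (hx : ∀ i, x (-i) = -x i)
    {A B : Matrix ι ι R} (hAB : ∀ i j, A i j - A (-i) j = B i j - B (-i) j) :
    x ᵥ* A = x ᵥ* B := by
  funext j
  apply mul_left_cancel₀ h2
  simp only [vecMul, dotProduct, two_mul_sum_mul_of_odd hx, hAB]

end Odd

lemma coe_phi (x : V₀ →₀ ℤ) : ⇑(phi x) = ⇑x ᵥ* phiMatrix := by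
  classical
  funext u
  simp [phi, phiMatrix, vecMul, dotProduct, Finsupp.linearCombination_apply, Finsupp.sum_fintype,
    Finsupp.finsetSum_apply, Finsupp.single_apply]

lemma sumMap_apply (x : V₀ →₀ ℤ) : sumMap x = ∑ v, x v • (v : ZMod 3 × ZMod 3) := by
  rw [sumMap, Finsupp.linearCombination_apply, Finsupp.sum_fintype _ _ (by simp)]

lemma mk_eq_mk_iff_eq_or_eq_neg (v w : V₀) :
    Projectivization.mk (ZMod 3) (v : ZMod 3 × ZMod 3) v.prop =
      Projectivization.mk (ZMod 3) (w : ZMod 3 × ZMod 3) w.prop ↔ v = w ∨ v = -w := by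
  rw [Projectivization.mk_eq_mk_iff', Subtype.ext_iff, Subtype.ext_iff, V₀.coe_neg]
  constructor
  · rintro ⟨a, ha⟩
    obtain rfl | rfl | rfl : a = 0 ∨ a = 1 ∨ a = -1 := by clear ha; revert a; decide
    · exact absurd (by rw [← ha, zero_smul]) v.prop
    · exact .inl (by rw [← ha, one_smul])
    · exact .inr (by rw [← ha, neg_one_smul])
  · rintro (h | h)
    · exact ⟨1, by rw [h, one_smul]⟩
    · exact ⟨-1, by rw [h, neg_one_smul]⟩

lemma projMap_apply_mk (x : V₀ →₀ ℤ) (w : V₀) :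
    projMap x (Projectivization.mk (ZMod 3) (w : ZMod 3 × ZMod 3) w.prop) = x w + x (-w) := by
  classical
  rw [projMap, Finsupp.lmapDomain_apply, Finsupp.mapDomain, Finsupp.sum_fintype _ _ (by simp),
    Finsupp.finsetSum_apply]
  simp only [Finsupp.single_apply, mk_eq_mk_iff_eq_or_eq_neg]
  rw [← sum_filter, show univ.filter (fun v => v = w ∨ v = -w) = {w, -w} by ext; simp,
    sum_pair w.ne_neg]

lemma mem_ker_projMap {x : V₀ →₀ ℤ} : x ∈ LinearMap.ker projMap ↔ ∀ v, x (-v) = -x v := by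
  rw [LinearMap.mem_ker]
  constructor
  · intro h v
    have := projMap_apply_mk x v
    rw [h, Finsupp.zero_apply] at this
    omega
  · intro h
    ext ℓ
    induction ℓ using Projectivization.ind with
    | h w hw => rw [projMap_apply_mk x ⟨w, hw⟩, h, add_neg_cancel, Finsupp.zero_apply]

lemma phiMatrix_neg_neg (v u : V₀) : phiMatrix (-v) (-u) = phiMatrix v u := by
  simp only [phiMatrix, of_apply, V₀.coe_neg, ω_neg_neg]

lemma phi_apply_neg {x : V₀ →₀ ℤ} (hx : ∀ v, x (-v) = -x v) (u : V₀) :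
    phi x (-u) = -phi x u := by
  simp only [coe_phi, vecMul, dotProduct]
  rw [← Fintype.sum_equiv (Equiv.neg V₀) (fun v => x (-v) * phiMatrix (-v) (-u)) _ fun _ => rfl]
  simp [hx, phiMatrix_neg_neg, sum_neg_distrib]

/-- The `u` with `ω v u = 1` form an affine line `u₀ + 𝔽₃ v`; its points sum to `3 u₀ = 0`. -/
lemma sum_filter_ω_eq_one : ∀ v : V₀,
    ∑ u ∈ univ.filter (fun u : V₀ => ω (v : ZMod 3 × ZMod 3) u = 1), (u : ZMod 3 × ZMod 3) = 0 := by
  decide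

lemma sumMap_phi (x : V₀ →₀ ℤ) : sumMap (phi x) = 0 := by
  suffices sumMap ∘ₗ phi = 0 from LinearMap.congr_fun this x
  refine Finsupp.lhom_ext' fun v => LinearMap.ext_ring ?_
  simpa [phi, sumMap, map_sum] using sum_filter_ω_eq_one v

lemma phiMatrix_sq_sub_phiMatrix_sq_neg : ∀ v w : V₀,
    (phiMatrix * phiMatrix) v w - (phiMatrix * phiMatrix) (-v) w =
      (-3 • (1 : Matrix V₀ V₀ ℤ)) v w - (-3 • (1 : Matrix V₀ V₀ ℤ)) (-v) w := by
  decide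

lemma phi_phi {x : V₀ →₀ ℤ} (hx : ∀ v, x (-v) = -x v) : phi (phi x) = -3 • x := by
  apply DFunLike.coe_injective
  rw [coe_phi, coe_phi, vecMul_vecMul,
    vecMul_eq_of_odd two_ne_zero hx phiMatrix_sq_sub_phiMatrix_sq_neg, vecMul_smul, vecMul_one,
    Finsupp.coe_smul]

lemma sum_mul_ω (x : V₀ →₀ ℤ) (u : ZMod 3 × ZMod 3) :
    ∑ v, (x v : ZMod 3) * ω u v = ω u (sumMap x) := by
  rw [sumMap_apply, ω, Prod.fst_sum, Prod.snd_sum, mul_sum, mul_sum, ← sum_sub_distrib]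
  refine sum_congr rfl fun v _ => ?_
  simp only [ω, zsmul_eq_mul, Prod.fst_mul, Prod.snd_mul, Prod.fst_intCast, Prod.snd_intCast]
  ring

/-- Both sides are `ω v u`: the left is `[ω v u = 1] - [ω v u = -1]`, the right `-2 ω v u`. -/
lemma intCast_phiMatrix_sub_phiMatrix_neg : ∀ v u : V₀,
    ((phiMatrix v u : ℤ) : ZMod 3) - (phiMatrix (-v) u : ℤ) =
      ω (u : ZMod 3 × ZMod 3) v - ω (u : ZMod 3 × ZMod 3) (-v : V₀) := by
  decide

lemma intCast_phi_apply {x : V₀ →₀ ℤ} (hx : ∀ v, x (-v) = -x v) (u : V₀) :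
    ((phi x u : ℤ) : ZMod 3) = ω (u : ZMod 3 × ZMod 3) (sumMap x) := by
  have hx' : ∀ v, (Int.castRingHom (ZMod 3) ∘ x) (-v) = -(Int.castRingHom (ZMod 3) ∘ x) v :=
    fun v => by simp [hx]
  rw [coe_phi, ← eq_intCast (Int.castRingHom (ZMod 3)), RingHom.map_vecMul,
    vecMul_eq_of_odd (A := phiMatrix.map (Int.castRingHom (ZMod 3)))
      (B := Matrix.of fun v u : V₀ => ω (u : ZMod 3 × ZMod 3) v) (by decide) hx'
      intCast_phiMatrix_sub_phiMatrix_neg, ← sum_mul_ω]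
  rfl

lemma Finsupp.exists_eq_smul_of_forall_dvd {α : Type*} {n : ℤ} {f : α →₀ ℤ} (h : ∀ a, n ∣ f a) :
    ∃ g : α →₀ ℤ, f = n • g :=
  ⟨f.mapRange (· / n) (Int.zero_ediv n), by ext a; simp [Int.mul_ediv_cancel' (h a)]⟩

lemma injOn_phi : Set.InjOn phi (LinearMap.ker projMap) := by
  intro a ha b hb hab
  rw [SetLike.mem_coe, mem_ker_projMap] at ha hb
  have h : (-3 : ℤ) • a = (-3 : ℤ) • b := by rw [← phi_phi ha, ← phi_phi hb, hab]
  exact smul_right_injective _ (by norm_num) h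

lemma exists_phi_eq {y : V₀ →₀ ℤ} (hy : ∀ v, y (-v) = -y v) (hs : sumMap y = 0) :
    ∃ x : V₀ →₀ ℤ, (∀ v, x (-v) = -x v) ∧ phi x = y := by
  obtain ⟨z, hz⟩ : ∃ z, phi y = (3 : ℤ) • z := Finsupp.exists_eq_smul_of_forall_dvd fun u => by
    exact_mod_cast (ZMod.intCast_zmod_eq_zero_iff_dvd _ 3).1 (by simp [intCast_phi_apply hy, hs, ω])
  have hz_odd : ∀ v, z (-v) = -z v := fun v => by
    have := phi_apply_neg hy v
    simp only [hz, Finsupp.smul_apply, smul_eq_mul] at this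
    omega
  refine ⟨-z, fun v => by simp [hz_odd], smul_right_injective _ (three_ne_zero : (3 : ℤ) ≠ 0) ?_⟩
  change (3 : ℤ) • phi (-z) = (3 : ℤ) • y
  rw [map_neg, smul_neg, ← map_zsmul, ← hz, phi_phi hy, neg_smul, neg_neg]

/-- For `p = 3`: the image under `φ` of `ker π` equals `ker s ∩ ker π`; in particular
`φ` restricts to a bijection from `ker π` onto `ker s ∩ ker π`. -/
theorem stmt6
    (s : ({v : ZMod 3 × ZMod 3 // v ≠ 0} →₀ ℤ) →ₗ[ℤ] ZMod 3 × ZMod 3)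
    (hs : s = Finsupp.linearCombination ℤ
      (fun v : {v : ZMod 3 × ZMod 3 // v ≠ 0} => (v : ZMod 3 × ZMod 3)))
    (π : ({v : ZMod 3 × ZMod 3 // v ≠ 0} →₀ ℤ) →ₗ[ℤ]
      (Projectivization (ZMod 3) (ZMod 3 × ZMod 3) →₀ ℤ))
    (hπ : π = Finsupp.lmapDomain ℤ ℤ
      (fun v : {v : ZMod 3 × ZMod 3 // v ≠ 0} =>
        Projectivization.mk (ZMod 3) (v : ZMod 3 × ZMod 3) v.prop))
    (φ : ({v : ZMod 3 × ZMod 3 // v ≠ 0} →₀ ℤ) →ₗ[ℤ] ({v : ZMod 3 × ZMod 3 // v ≠ 0} →₀ ℤ))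
    (hφ : φ = Finsupp.linearCombination ℤ
      (fun v : {v : ZMod 3 × ZMod 3 // v ≠ 0} =>
        ∑ u ∈ Finset.univ.filter (fun u : {v : ZMod 3 × ZMod 3 // v ≠ 0} =>
            (v : ZMod 3 × ZMod 3).1 * (u : ZMod 3 × ZMod 3).2
              - (v : ZMod 3 × ZMod 3).2 * (u : ZMod 3 × ZMod 3).1 = 1),
          Finsupp.single u (1 : ℤ))) :
    φ '' (LinearMap.ker π : Set _) =
      (LinearMap.ker s : Set _) ∩ (LinearMap.ker π : Set _) ∧
    Set.BijOn φ (LinearMap.ker π : Set _)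
      ((LinearMap.ker s : Set _) ∩ (LinearMap.ker π : Set _)) := by
  obtain rfl : s = sumMap := hs
  obtain rfl : π = projMap := hπ
  obtain rfl : φ = phi := hφ
  have himage : phi '' (LinearMap.ker projMap : Set _) =
      (LinearMap.ker sumMap : Set _) ∩ (LinearMap.ker projMap : Set _) := by
    ext y
    simp only [Set.mem_image, Set.mem_inter_iff, SetLike.mem_coe, mem_ker_projMap,
      LinearMap.mem_ker (f := sumMap)]
    constructor
    · rintro ⟨x, hx, rfl⟩
      exact ⟨sumMap_phi x, phi_apply_neg hx⟩
    · rintro ⟨hs, hy⟩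
      exact exists_phi_eq hy hs
  exact ⟨himage, himage ▸ injOn_phi.bijOn_image⟩
end

section
/- Let k be a field in which 6 is invertible and let f = X₁²X₂ + X₀²X₁ ∈ k[X₀,X₁,X₂] (a smooth conic together with a tangent line). Then the projective stabilizer S_f/Z is isomorphic to the group of affine transformations x ↦ ax + b of the line over k (a ∈ kˣ, b ∈ k), i.e., to the semidirect product k ⋊ kˣ with kˣ acting on k by multiplication. -/
/-!
Write `f = X₁ (X₁X₂ + X₀²)`, and for an invertible `M` with `f(Mx) = c f(x)` let `Lᵢ` be the
linear form given by the `i`-th row of `M`, so that `f(Mx) = L₁ (L₁L₂ + L₀²)`. On the plane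
`X₁ = 0` this identity says that a binary linear form times a binary quadratic form vanishes; if
the linear factor (the restriction of `L₁`) were nonzero, the quadratic one would vanish, which
makes columns `0` and `2` of `M` proportional and contradicts invertibility. Hence
`L₁ = M₁₁X₁`, and the remaining coefficients show that `M₀₂ = 0` and that the third row is
determined by `M₀₀, M₀₁, M₁₁`. Such a matrix acts on the affine coordinate `X₀/X₁` by
`x ↦ (M₀₀x + M₀₁)/M₁₁`; this gives a surjective homomorphism from the stabilizer onto the affine
group of the line whose kernel consists of the scalar matrices.
-/

open MvPolynomial

noncomputable section

section Cubic

variable {R : Type*} [CommRing R]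

/-- `linearSubst M f = f(M·x)`, i.e. `f · M` for the right action by substitution. -/
def linearSubst {σ : Type*} [Fintype σ] (M : Matrix σ σ R) :
    MvPolynomial σ R →ₐ[R] MvPolynomial σ R :=
  aeval fun i => ∑ j, C (M i j) * X j

def conicTangentCubic : MvPolynomial (Fin 3) R := X 1 ^ 2 * X 2 + X 0 ^ 2 * X 1

theorem coeff_X_pow_mul_X_pow_mul_X_pow (a b c a' b' c' : ℕ) :
    coeff (Finsupp.single 0 a' + Finsupp.single 1 b' + Finsupp.single 2 c')
      (X 0 ^ a * X 1 ^ b * X 2 ^ c : MvPolynomial (Fin 3) R) =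
      if a = a' ∧ b = b' ∧ c = c' then 1 else 0 := by
  simp only [X_pow_eq_monomial, monomial_mul, mul_one, coeff_monomial, Finsupp.ext_iff,
    Fin.forall_fin_succ]
  simp [Finsupp.single_apply]

-- Exponents `0` and `1` are written out so that `coeff_X_pow_mul_X_pow_mul_X_pow` applies to
-- every term.
theorem linearSubst_conicTangentCubic (M : Matrix (Fin 3) (Fin 3) R) :
    linearSubst M conicTangentCubic =
      C (M 1 0 ^ 2 * M 2 0 + M 0 0 ^ 2 * M 1 0) * (X 0 ^ 3 * X 1 ^ 0 * X 2 ^ 0) +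
      C (2 * M 1 0 * M 1 1 * M 2 0 + M 1 0 ^ 2 * M 2 1 + 2 * M 0 0 * M 0 1 * M 1 0 +
        M 0 0 ^ 2 * M 1 1) * (X 0 ^ 2 * X 1 ^ 1 * X 2 ^ 0) +
      C (2 * M 1 0 * M 1 2 * M 2 0 + M 1 0 ^ 2 * M 2 2 + 2 * M 0 0 * M 0 2 * M 1 0 +
        M 0 0 ^ 2 * M 1 2) * (X 0 ^ 2 * X 1 ^ 0 * X 2 ^ 1) +
      C (M 1 1 ^ 2 * M 2 0 + 2 * M 1 0 * M 1 1 * M 2 1 + M 0 1 ^ 2 * M 1 0 +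
        2 * M 0 0 * M 0 1 * M 1 1) * (X 0 ^ 1 * X 1 ^ 2 * X 2 ^ 0) +
      C (2 * M 1 1 * M 1 2 * M 2 0 + 2 * M 1 0 * M 1 2 * M 2 1 + 2 * M 1 0 * M 1 1 * M 2 2 +
        2 * M 0 1 * M 0 2 * M 1 0 + 2 * M 0 0 * M 0 2 * M 1 1 + 2 * M 0 0 * M 0 1 * M 1 2) *
        (X 0 ^ 1 * X 1 ^ 1 * X 2 ^ 1) +
      C (M 1 2 ^ 2 * M 2 0 + 2 * M 1 0 * M 1 2 * M 2 2 + M 0 2 ^ 2 * M 1 0 +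
        2 * M 0 0 * M 0 2 * M 1 2) * (X 0 ^ 1 * X 1 ^ 0 * X 2 ^ 2) +
      C (M 1 1 ^ 2 * M 2 1 + M 0 1 ^ 2 * M 1 1) * (X 0 ^ 0 * X 1 ^ 3 * X 2 ^ 0) +
      C (2 * M 1 1 * M 1 2 * M 2 1 + M 1 1 ^ 2 * M 2 2 + 2 * M 0 1 * M 0 2 * M 1 1 +
        M 0 1 ^ 2 * M 1 2) * (X 0 ^ 0 * X 1 ^ 2 * X 2 ^ 1) +
      C (M 1 2 ^ 2 * M 2 1 + 2 * M 1 1 * M 1 2 * M 2 2 + M 0 2 ^ 2 * M 1 1 +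
        2 * M 0 1 * M 0 2 * M 1 2) * (X 0 ^ 0 * X 1 ^ 1 * X 2 ^ 2) +
      C (M 1 2 ^ 2 * M 2 2 + M 0 2 ^ 2 * M 1 2) * (X 0 ^ 0 * X 1 ^ 0 * X 2 ^ 3) := by
  simp only [linearSubst, conicTangentCubic, map_add, map_mul, map_pow, map_ofNat, aeval_X,
    Fin.sum_univ_three]
  ring

theorem coeff_eqs_of_linearSubst_eq {M : Matrix (Fin 3) (Fin 3) R} {c : R}
    (h : linearSubst M conicTangentCubic = c • conicTangentCubic) :
    M 1 0 ^ 2 * M 2 0 + M 0 0 ^ 2 * M 1 0 = 0 ∧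
    2 * M 1 0 * M 1 1 * M 2 0 + M 1 0 ^ 2 * M 2 1 + 2 * M 0 0 * M 0 1 * M 1 0 +
      M 0 0 ^ 2 * M 1 1 = c ∧
    2 * M 1 0 * M 1 2 * M 2 0 + M 1 0 ^ 2 * M 2 2 + 2 * M 0 0 * M 0 2 * M 1 0 +
      M 0 0 ^ 2 * M 1 2 = 0 ∧
    M 1 1 ^ 2 * M 2 0 + 2 * M 1 0 * M 1 1 * M 2 1 + M 0 1 ^ 2 * M 1 0 +
      2 * M 0 0 * M 0 1 * M 1 1 = 0 ∧
    M 1 2 ^ 2 * M 2 0 + 2 * M 1 0 * M 1 2 * M 2 2 + M 0 2 ^ 2 * M 1 0 +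
      2 * M 0 0 * M 0 2 * M 1 2 = 0 ∧
    M 1 1 ^ 2 * M 2 1 + M 0 1 ^ 2 * M 1 1 = 0 ∧
    2 * M 1 1 * M 1 2 * M 2 1 + M 1 1 ^ 2 * M 2 2 + 2 * M 0 1 * M 0 2 * M 1 1 +
      M 0 1 ^ 2 * M 1 2 = c ∧
    M 1 2 ^ 2 * M 2 1 + 2 * M 1 1 * M 1 2 * M 2 2 + M 0 2 ^ 2 * M 1 1 +
      2 * M 0 1 * M 0 2 * M 1 2 = 0 ∧
    M 1 2 ^ 2 * M 2 2 + M 0 2 ^ 2 * M 1 2 = 0 := by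
  have hf : (conicTangentCubic : MvPolynomial (Fin 3) R) =
      C 1 * (X 0 ^ 0 * X 1 ^ 2 * X 2 ^ 1) + C 1 * (X 0 ^ 2 * X 1 ^ 1 * X 2 ^ 0) := by
    simp [conicTangentCubic]
  rw [linearSubst_conicTangentCubic, hf, smul_eq_C_mul] at h
  have e := fun a b d =>
    congrArg (coeff (Finsupp.single 0 a + Finsupp.single 1 b + Finsupp.single 2 d)) h
  simp only [coeff_add, coeff_C_mul, coeff_X_pow_mul_X_pow_mul_X_pow] at e
  exact ⟨by simpa using e 3 0 0, by simpa using e 2 1 0, by simpa using e 2 0 1,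
    by simpa using e 1 2 0, by simpa using e 1 0 2, by simpa using e 0 3 0,
    by simpa using e 0 2 1, by simpa using e 0 1 2, by simpa using e 0 0 3⟩

structure IsStabilizerShape (M : Matrix (Fin 3) (Fin 3) R) : Prop where
  one_zero : M 1 0 = 0
  one_two : M 1 2 = 0
  zero_two : M 0 2 = 0
  zero_zero_ne : M 0 0 ≠ 0
  one_one_ne : M 1 1 ≠ 0
  two_zero : M 1 1 * M 2 0 = -(2 * M 0 0 * M 0 1)
  two_one : M 1 1 * M 2 1 = -M 0 1 ^ 2
  two_two : M 1 1 * M 2 2 = M 0 0 ^ 2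

theorem IsStabilizerShape.linearSubst_eq {M : Matrix (Fin 3) (Fin 3) R}
    (h : IsStabilizerShape M) :
    linearSubst M conicTangentCubic = (M 0 0 ^ 2 * M 1 1) • conicTangentCubic := by
  have h₀ := congrArg (C (σ := Fin 3)) h.two_zero
  have h₁ := congrArg (C (σ := Fin 3)) h.two_one
  have h₂ := congrArg (C (σ := Fin 3)) h.two_two
  simp only [map_mul, map_neg, map_pow, map_ofNat] at h₀ h₁ h₂
  simp only [linearSubst, conicTangentCubic, map_add, map_mul, map_pow, aeval_X,
    Fin.sum_univ_three, h.one_zero, h.one_two, h.zero_two, map_zero, zero_mul, add_zero,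
    zero_add, smul_eq_C_mul]
  linear_combination C (M 1 1) * X 1 ^ 2 * (X 0 * h₀ + X 1 * h₁ + X 2 * h₂)

end Cubic

section Domain

variable {R : Type*} [CommRing R] [IsDomain R]

theorem eq_zero_or_eq_zero_of_linear_mul_quadratic {a₀ a₁ b₀ b₁ b₂ : R}
    (h₀ : a₀ * b₀ = 0) (h₁ : a₀ * b₁ + a₁ * b₀ = 0) (h₂ : a₀ * b₂ + a₁ * b₁ = 0)
    (h₃ : a₁ * b₂ = 0) : (a₀ = 0 ∧ a₁ = 0) ∨ (b₀ = 0 ∧ b₁ = 0 ∧ b₂ = 0) := by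
  rcases eq_or_ne a₀ 0 with rfl | ha₀
  · rcases eq_or_ne a₁ 0 with rfl | ha₁
    · exact Or.inl ⟨rfl, rfl⟩
    · simp_all
  · obtain rfl : b₀ = 0 := (mul_eq_zero.1 h₀).resolve_left ha₀
    simp_all

-- The hypotheses say `(q₀x + q₂z)(r₀x + r₂z) + (p₀x + p₂z)² = 0`.
theorem minors_eq_zero_of_mul_add_sq_eq_zero {p₀ p₂ q₀ q₂ r₀ r₂ : R}
    (h₀ : q₀ * r₀ + p₀ ^ 2 = 0) (h₁ : q₀ * r₂ + q₂ * r₀ + 2 * p₀ * p₂ = 0)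
    (h₂ : q₂ * r₂ + p₂ ^ 2 = 0) : q₂ * p₀ - q₀ * p₂ = 0 ∧ q₀ * r₂ - q₂ * r₀ = 0 := by
  constructor <;> refine pow_eq_zero_iff (n := 2) two_ne_zero |>.1 ?_
  · linear_combination q₂ ^ 2 * h₀ + q₀ ^ 2 * h₂ - q₀ * q₂ * h₁
  · linear_combination (q₀ * r₂ + q₂ * r₀ - 2 * p₀ * p₂) * h₁ + 4 * p₂ ^ 2 * h₀
      - 4 * q₀ * r₀ * h₂

theorem one_zero_eq_zero_and_one_two_eq_zero {M : Matrix (Fin 3) (Fin 3) R} (hdet : M.det ≠ 0)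
    (h₃₀₀ : M 1 0 ^ 2 * M 2 0 + M 0 0 ^ 2 * M 1 0 = 0)
    (h₂₀₁ : 2 * M 1 0 * M 1 2 * M 2 0 + M 1 0 ^ 2 * M 2 2 + 2 * M 0 0 * M 0 2 * M 1 0 +
      M 0 0 ^ 2 * M 1 2 = 0)
    (h₁₀₂ : M 1 2 ^ 2 * M 2 0 + 2 * M 1 0 * M 1 2 * M 2 2 + M 0 2 ^ 2 * M 1 0 +
      2 * M 0 0 * M 0 2 * M 1 2 = 0)
    (h₀₀₃ : M 1 2 ^ 2 * M 2 2 + M 0 2 ^ 2 * M 1 2 = 0) :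
    M 1 0 = 0 ∧ M 1 2 = 0 := by
  rcases eq_zero_or_eq_zero_of_linear_mul_quadratic (a₀ := M 1 0) (a₁ := M 1 2)
    (b₀ := M 1 0 * M 2 0 + M 0 0 ^ 2)
    (b₁ := M 1 0 * M 2 2 + M 1 2 * M 2 0 + 2 * M 0 0 * M 0 2) (b₂ := M 1 2 * M 2 2 + M 0 2 ^ 2)
    (by linear_combination h₃₀₀) (by linear_combination h₂₀₁) (by linear_combination h₁₀₂)
    (by linear_combination h₀₀₃) with h | ⟨h₀, h₁, h₂⟩
  · exact h
  obtain ⟨hu, hv⟩ := minors_eq_zero_of_mul_add_sq_eq_zero h₀ h₁ h₂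
  have hdet₀ : M 1 0 * M.det = 0 := by
    rw [Matrix.det_fin_three]
    linear_combination
      (M 1 1 * M 2 0 - M 1 0 * M 2 1) * hu + (M 1 1 * M 0 0 - M 0 1 * M 1 0) * hv
  have hdet₂ : M 1 2 * M.det = 0 := by
    rw [Matrix.det_fin_three]
    linear_combination
      (M 1 1 * M 2 2 - M 1 2 * M 2 1) * hu + (M 1 1 * M 0 2 - M 0 1 * M 1 2) * hv
  exact ⟨(mul_eq_zero.1 hdet₀).resolve_right hdet, (mul_eq_zero.1 hdet₂).resolve_right hdet⟩

theorem isStabilizerShape_of_linearSubst_eq {M : Matrix (Fin 3) (Fin 3) R} (hdet : M.det ≠ 0)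
    {c : R} (hc : c ≠ 0) (h : linearSubst M conicTangentCubic = c • conicTangentCubic) :
    IsStabilizerShape M := by
  obtain ⟨h₃₀₀, h₂₁₀, h₂₀₁, h₁₂₀, h₁₀₂, h₀₃₀, h₀₂₁, h₀₁₂, h₀₀₃⟩ :=
    coeff_eqs_of_linearSubst_eq h
  obtain ⟨h₁₀, h₁₂⟩ := one_zero_eq_zero_and_one_two_eq_zero hdet h₃₀₀ h₂₀₁ h₁₀₂ h₀₀₃
  simp only [h₁₀, h₁₂, mul_zero, zero_mul, add_zero, zero_add, ne_eq, OfNat.ofNat_ne_zero,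
    not_false_eq_true, zero_pow] at h₂₁₀ h₁₂₀ h₀₂₁ h₀₁₂
  have hc' : M 0 0 ^ 2 * M 1 1 = c := by linear_combination h₂₁₀
  have h₁₁ : M 1 1 ≠ 0 := by rintro h; exact hc (by rw [← hc', h, mul_zero])
  have h₀₀ : M 0 0 ≠ 0 := by rintro h; exact hc (by rw [← hc', h]; ring)
  have h₀₂ : M 0 2 = 0 := by
    have : M 1 1 * M 0 2 ^ 2 = 0 := by linear_combination h₀₁₂
    exact pow_eq_zero_iff two_ne_zero |>.1 <| (mul_eq_zero.1 this).resolve_left h₁₁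
  refine ⟨h₁₀, h₁₂, h₀₂, h₀₀, h₁₁, mul_left_cancel₀ h₁₁ ?_, mul_left_cancel₀ h₁₁ ?_,
    mul_left_cancel₀ h₁₁ ?_⟩
  · linear_combination h₁₂₀
  · linear_combination h₀₃₀
  · linear_combination h₀₂₁ - hc' - 2 * M 0 1 * M 1 1 * h₀₂

theorem IsStabilizerShape.eq_smul_one {M : Matrix (Fin 3) (Fin 3) R} (h : IsStabilizerShape M)
    (h₀₁ : M 0 1 = 0) (h₀₀ : M 0 0 = M 1 1) : M = M 1 1 • 1 := by
  have h₂₀ : M 2 0 = 0 := mul_left_cancel₀ h.one_one_ne (by rw [h.two_zero, h₀₁]; ring)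
  have h₂₁ : M 2 1 = 0 := mul_left_cancel₀ h.one_one_ne (by rw [h.two_one, h₀₁]; ring)
  have h₂₂ : M 2 2 = M 1 1 := mul_left_cancel₀ h.one_one_ne (by rw [h.two_two, h₀₀]; ring)
  ext i j
  fin_cases i <;> fin_cases j <;>
    simp [h₀₀, h₀₁, h.zero_two, h.one_zero, h.one_two, h₂₀, h₂₁, h₂₂]

end Domain

section Field

variable {k : Type*} [Field k]

theorem exists_linearSubst_eq_smul_iff_isStabilizerShape (g : GL (Fin 3) k) :
    (∃ c : kˣ, linearSubst (g : Matrix (Fin 3) (Fin 3) k) conicTangentCubic =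
      (c : k) • conicTangentCubic) ↔ IsStabilizerShape (g : Matrix (Fin 3) (Fin 3) k) := by
  refine ⟨fun ⟨c, hc⟩ => isStabilizerShape_of_linearSubst_eq ?_ c.ne_zero hc, fun h => ?_⟩
  · exact ((Matrix.isUnit_iff_isUnit_det _).1 g.isUnit).ne_zero
  · exact ⟨Units.mk0 _ (mul_ne_zero (pow_ne_zero 2 h.zero_zero_ne) h.one_one_ne),
      h.linearSubst_eq⟩

def affineOfUnit (a : kˣ) (b : k) : k ≃ᵃ[k] k :=
  (LinearEquiv.smulOfUnit a).toAffineEquiv.trans (AffineEquiv.constVAdd k k b)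

@[simp]
theorem affineOfUnit_apply (a : kˣ) (b : k) (x : k) : affineOfUnit a b x = a * x + b := by
  simp [affineOfUnit, LinearEquiv.smulOfUnit, Units.smul_def, add_comm]

theorem exists_eq_affineOfUnit (e : k ≃ᵃ[k] k) : ∃ (a : kˣ) (b : k), e = affineOfUnit a b := by
  have ha : e.linear 1 ≠ 0 := (map_ne_zero_iff _ e.linear.injective).2 one_ne_zero
  refine ⟨Units.mk0 _ ha, e 0, AffineEquiv.ext fun x => ?_⟩
  rw [affineOfUnit_apply, Units.val_mk0, mul_comm, ← smul_eq_mul, ← e.linear.map_smul,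
    smul_eq_mul, mul_one]
  simpa using e.map_vadd 0 x

variable (S : Subgroup (GL (Fin 3) k))
  (hS : ∀ g : S, IsStabilizerShape ((g : GL (Fin 3) k) : Matrix (Fin 3) (Fin 3) k))

def stabilizerToAffine : S →* k ≃ᵃ[k] k where
  toFun g :=
    let M : Matrix (Fin 3) (Fin 3) k := (g : GL (Fin 3) k)
    affineOfUnit (Units.mk0 (M 0 0 / M 1 1) (div_ne_zero (hS g).zero_zero_ne (hS g).one_one_ne))
      (M 0 1 / M 1 1)
  map_one' := by ext x; simp
  map_mul' g g' := by
    have h := hS g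
    have h' := hS g'
    ext x
    simp only [AffineEquiv.coe_mul, Function.comp_apply, affineOfUnit_apply, Units.val_mk0,
      Subgroup.coe_mul, Units.val_mul, Matrix.mul_apply, Fin.sum_univ_three, h.zero_two,
      h.one_zero, h.one_two, h'.one_zero]
    field_simp [h.one_one_ne, h'.one_one_ne]
    ring

theorem stabilizerToAffine_apply (g : S) (x : k) :
    stabilizerToAffine S hS g x =
      ((g : GL (Fin 3) k) : Matrix (Fin 3) (Fin 3) k) 0 0 /
          ((g : GL (Fin 3) k) : Matrix (Fin 3) (Fin 3) k) 1 1 * x +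
        ((g : GL (Fin 3) k) : Matrix (Fin 3) (Fin 3) k) 0 1 /
          ((g : GL (Fin 3) k) : Matrix (Fin 3) (Fin 3) k) 1 1 :=
  affineOfUnit_apply _ _ x

theorem stabilizerToAffine_surjective
    (hS' : ∀ g : GL (Fin 3) k, IsStabilizerShape (g : Matrix (Fin 3) (Fin 3) k) → g ∈ S) :
    Function.Surjective (stabilizerToAffine S hS) := by
  intro e
  obtain ⟨a, b, rfl⟩ := exists_eq_affineOfUnit e
  let A : Matrix (Fin 3) (Fin 3) k :=
    !![(a : k), b, 0; 0, 1, 0; -(2 * a * b), -b ^ 2, (a : k) ^ 2]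
  have hA : IsStabilizerShape A :=
    ⟨rfl, rfl, rfl, a.ne_zero, one_ne_zero, by simp [A], by simp [A], by simp [A]⟩
  have hdet : A.det ≠ 0 := by simp [A, Matrix.det_fin_three]
  let g := Matrix.GeneralLinearGroup.mkOfDetNeZero A hdet
  exact ⟨⟨g, hS' g hA⟩, AffineEquiv.ext fun x => by simp [stabilizerToAffine_apply, g, A]⟩

theorem mem_ker_stabilizerToAffine_iff (g : S) :
    g ∈ (stabilizerToAffine S hS).ker ↔
      ∃ c : kˣ, ((g : GL (Fin 3) k) : Matrix (Fin 3) (Fin 3) k) = (c : k) • 1 := by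
  have h := hS g
  rw [MonoidHom.mem_ker]
  constructor
  · intro hg
    have h₀ := DFunLike.congr_fun hg 0
    have h₁ := DFunLike.congr_fun hg 1
    simp only [stabilizerToAffine_apply, AffineEquiv.coe_one, id_eq] at h₀ h₁
    simp only [mul_zero, zero_add, div_eq_zero_iff, h.one_one_ne, or_false] at h₀
    simp only [h₀, zero_div, mul_one, add_zero, div_eq_one_iff_eq h.one_one_ne] at h₁
    exact ⟨Units.mk0 _ h.one_one_ne, h.eq_smul_one h₀ h₁⟩
  · rintro ⟨c, hc⟩
    ext x
    simp [stabilizerToAffine_apply, hc]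

end Field

end

theorem stmt15_general (k : Type*) [Field k]
    (S : Subgroup (GL (Fin 3) k))
    (hS : ∀ g : GL (Fin 3) k, g ∈ S ↔ ∃ c : kˣ,
        aeval (fun i => ∑ j : Fin 3, C ((g : Matrix (Fin 3) (Fin 3) k) i j) * X j)
            (X 1 ^ 2 * X 2 + X 0 ^ 2 * X 1 : MvPolynomial (Fin 3) k)
          = (c : k) • (X 1 ^ 2 * X 2 + X 0 ^ 2 * X 1 : MvPolynomial (Fin 3) k))
    (Z : Subgroup (GL (Fin 3) k))
    (hZ : ∀ g : GL (Fin 3) k, g ∈ Z ↔ ∃ c : kˣ,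
        (g : Matrix (Fin 3) (Fin 3) k) = (c : k) • (1 : Matrix (Fin 3) (Fin 3) k))
    [(Z.subgroupOf S).Normal] :
    Nonempty ((S ⧸ Z.subgroupOf S) ≃* (k ≃ᵃ[k] k)) := by
  have hmem (g : GL (Fin 3) k) : g ∈ S ↔ IsStabilizerShape (g : Matrix (Fin 3) (Fin 3) k) :=
    (hS g).trans (exists_linearSubst_eq_smul_iff_isStabilizerShape g)
  let φ := stabilizerToAffine S fun g => (hmem g).1 g.2
  have hker : Z.subgroupOf S = φ.ker := by
    ext g
    rw [Subgroup.mem_subgroupOf, hZ, mem_ker_stabilizerToAffine_iff]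
  exact ⟨(QuotientGroup.quotientMulEquivOfEq hker).trans
    (QuotientGroup.quotientKerEquivOfSurjective φ
      (stabilizerToAffine_surjective S _ fun g => (hmem g).2))⟩

/-- Over a field `k` with `6` invertible, the projective stabilizer `S/Z` of the cubic
`X₁²X₂ + X₀²X₁` (a smooth conic together with a tangent line) is isomorphic to the group
of affine transformations `x ↦ ax + b` of the line over `k`. -/
theorem stmt15 (k : Type*) [Field k] (h6 : IsUnit (6 : k))
    (S : Subgroup (GL (Fin 3) k))
    (hS : ∀ g : GL (Fin 3) k, g ∈ S ↔ ∃ c : kˣ,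
        aeval (fun i => ∑ j : Fin 3, C ((g : Matrix (Fin 3) (Fin 3) k) i j) * X j)
            (X 1 ^ 2 * X 2 + X 0 ^ 2 * X 1 : MvPolynomial (Fin 3) k)
          = (c : k) • (X 1 ^ 2 * X 2 + X 0 ^ 2 * X 1 : MvPolynomial (Fin 3) k))
    (Z : Subgroup (GL (Fin 3) k))
    (hZ : ∀ g : GL (Fin 3) k, g ∈ Z ↔ ∃ c : kˣ,
        (g : Matrix (Fin 3) (Fin 3) k) = (c : k) • (1 : Matrix (Fin 3) (Fin 3) k))
    [(Z.subgroupOf S).Normal] :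
    Nonempty ((S ⧸ Z.subgroupOf S) ≃* (k ≃ᵃ[k] k)) :=
  stmt15_general k S hS Z hZ
end
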